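/- arXiv:math/0307301 — 4 statements merged into one kernel-verified Lean document; each statement's English description precedes it below -/
import Mathlib

section
/- Let a, c, n be integers with 1 ≤ a ≤ c and −3a ≤ n < 0. Then the following are equivalent: (i) n = −3a; (ii) every bihomogeneous polynomial F of type (n; a,a,c) in ℂ[u,v,x,y,z,t] lies in an ideal of the form (t, λy+μz) for some pair (λ,μ) ∈ ℂ² with (λ,μ) ≠ (0,0). (Geometrically: when a = b and n < 0, every member X ∈ |3M+nL| on 𝔽(0,a,a,c) contains a surface of the form {t = ℓ(y,z) = 0} with ℓ a nonzero linear form if and only if n = −3a.) -/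
/-!
If `n = -3a`, a monomial `u^p v^q x^α y^β z^γ` of `F` free of `t` has
`p + q = a (β + γ - 3) ≥ 0`, which forces `β + γ = 3`: modulo `t`, `F` is a binary cubic form
in `y, z`, and over `ℂ` such a form has a linear factor `λy + μz`.
If `n > -3a`, then for `N = n + 3a ≥ 1` the polynomial `u^N y^3 + v^N z^3` has type `(n; a,a,c)`,
but it does not vanish at the points `(u,v,x,y,z,t) = (1,0,0,μ,-λ,0)` and `(0,1,0,μ,-λ,0)` of
`V(t, λy + μz)` unless `λ = μ = 0`.
-/

open MvPolynomial

/-- Variables of `ℂ[u,v,x,y,z,t]` are indexed by `Fin 6` as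
`u = X 0`, `v = X 1`, `x = X 2`, `y = X 3`, `z = X 4`, `t = X 5`.
A polynomial `F` is bihomogeneous of type `(n; a,b,c)` if every monomial
`u^p v^q x^α y^β z^γ t^δ` occurring in it satisfies `α+β+γ+δ = 3` and
`p + q = n + a*β + b*γ + c*δ`. -/
def Bihom (n a b c : ℤ) (F : MvPolynomial (Fin 6) ℂ) : Prop :=
  ∀ d ∈ F.support,
    d 2 + d 3 + d 4 + d 5 = 3 ∧
    (d 0 : ℤ) + (d 1 : ℤ) = n + a * (d 3 : ℤ) + b * (d 4 : ℤ) + c * (d 5 : ℤ)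

theorem exists_linear_dvd_binary_cubic {K R : Type*} [Field K] [IsAlgClosed K] [CommRing R]
    [Algebra K R] (c : ℕ → K) (y z : R) :
    ∃ l m : K, ¬(l = 0 ∧ m = 0) ∧
      algebraMap K R l * y + algebraMap K R m * z ∣
        ∑ i ∈ Finset.range 4, algebraMap K R (c i) * y ^ i * z ^ (3 - i) := by
  set φ := algebraMap K R
  simp only [Finset.sum_range_succ, Finset.sum_range_zero, zero_add, pow_zero, mul_one,
    pow_one, Nat.reduceSub]
  by_cases h3 : c 3 = 0
  · refine ⟨0, 1, by simp, φ (c 0) * z ^ 2 + φ (c 1) * y * z + φ (c 2) * y ^ 2, ?_⟩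
    simp only [h3, map_zero, map_one]
    ring
  · obtain ⟨r, hr⟩ := IsAlgClosed.exists_root (Polynomial.C (c 3) * Polynomial.X ^ 3 +
      Polynomial.C (c 2) * Polynomial.X ^ 2 + Polynomial.C (c 1) * Polynomial.X +
      Polynomial.C (c 0)) (by rw [Polynomial.degree_cubic h3]; norm_num)
    have hroot : φ (c 3) * φ r ^ 3 + φ (c 2) * φ r ^ 2 + φ (c 1) * φ r + φ (c 0) = 0 := by
      simp only [← map_pow, ← map_mul, ← map_add]
      simpa using congrArg φ hr
    refine ⟨1, -r, by simp, φ (c 3) * y ^ 2 + (φ (c 2) + φ (c 3) * φ r) * y * z +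
      (φ (c 1) + φ (c 2) * φ r + φ (c 3) * φ r ^ 2) * z ^ 2, ?_⟩
    simp only [map_one, map_neg]
    linear_combination z ^ 3 * hroot

section CubicPart

variable {R : Type*} [CommSemiring R]

noncomputable def cubicExp (i : ℕ) : Fin 6 →₀ ℕ :=
  Finsupp.single 3 i + Finsupp.single 4 (3 - i)

theorem cubicExp_apply_three (i : ℕ) : cubicExp i 3 = i := by
  simp [cubicExp]

theorem cubicExp_injective : Function.Injective cubicExp := fun i j h => by
  simpa [cubicExp_apply_three] using DFunLike.congr_fun h 3

noncomputable def yzCubicPart (F : MvPolynomial (Fin 6) R) : MvPolynomial (Fin 6) R :=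
  ∑ i ∈ Finset.range 4, monomial (cubicExp i) (coeff (cubicExp i) F)

theorem yzCubicPart_eq_sum (F : MvPolynomial (Fin 6) R) :
    yzCubicPart F =
      ∑ i ∈ Finset.range 4, C (coeff (cubicExp i) F) * X 3 ^ i * X 4 ^ (3 - i) := by
  refine Finset.sum_congr rfl fun i _ => ?_
  rw [X_pow_eq_monomial, X_pow_eq_monomial, C_mul_monomial, monomial_mul, cubicExp]
  simp

theorem coeff_cubicExp_yzCubicPart (F : MvPolynomial (Fin 6) R) {i : ℕ} (hi : i < 4) :
    coeff (cubicExp i) (yzCubicPart F) = coeff (cubicExp i) F := by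
  simp [yzCubicPart, coeff_sum, coeff_monomial, cubicExp_injective.eq_iff, hi]

theorem coeff_yzCubicPart_of_ne (F : MvPolynomial (Fin 6) R) {d : Fin 6 →₀ ℕ}
    (hd : ∀ i < 4, cubicExp i ≠ d) : coeff d (yzCubicPart F) = 0 := by
  rw [yzCubicPart, coeff_sum]
  refine Finset.sum_eq_zero fun i hi => ?_
  rw [coeff_monomial, if_neg (hd i (Finset.mem_range.mp hi))]

end CubicPart

theorem bihom_monomial {n a b c : ℤ} {d : Fin 6 →₀ ℕ} (r : ℂ)
    (h₁ : d 2 + d 3 + d 4 + d 5 = 3)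
    (h₂ : (d 0 : ℤ) + (d 1 : ℤ) = n + a * (d 3 : ℤ) + b * (d 4 : ℤ) + c * (d 5 : ℤ)) :
    Bihom n a b c (MvPolynomial.monomial d r) := fun d' hd' => by
  rw [Finset.mem_singleton.mp (support_monomial_subset hd')]
  exact ⟨h₁, h₂⟩

namespace Bihom

variable {n a b c : ℤ} {F G : MvPolynomial (Fin 6) ℂ}

theorem add (hF : Bihom n a b c F) (hG : Bihom n a b c G) : Bihom n a b c (F + G) :=
  fun d hd => (Finset.mem_union.mp (support_add hd)).elim (hF d) (hG d)

theorem eq_cubicExp (ha : 0 < a) (hF : Bihom (-3 * a) a a c F) {d : Fin 6 →₀ ℕ}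
    (hd : d ∈ F.support) (h5 : d 5 = 0) : d 3 < 4 ∧ d = cubicExp (d 3) := by
  obtain ⟨h₁, h₂⟩ := hF d hd
  rw [h5] at h₁ h₂
  push_cast at h₂
  have h34 : d 3 + d 4 = 3 := by
    have : (3 : ℤ) ≤ d 3 + d 4 := by nlinarith
    omega
  have h01 : (d 0 : ℤ) + d 1 = 0 := by
    have h34' : (d 3 : ℤ) + d 4 = 3 := by exact_mod_cast h34
    linear_combination h₂ + a * h34'
  refine ⟨by omega, Finsupp.ext fun i => ?_⟩
  fin_cases i <;> simp [cubicExp] <;> omega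

theorem coeff_yzCubicPart (ha : 0 < a) (hF : Bihom (-3 * a) a a c F) {d : Fin 6 →₀ ℕ}
    (h5 : d 5 = 0) : coeff d (yzCubicPart F) = coeff d F := by
  by_cases hd : d ∈ F.support
  · obtain ⟨h3, hd⟩ := hF.eq_cubicExp ha hd h5
    rw [hd]
    exact coeff_cubicExp_yzCubicPart F h3
  rw [notMem_support_iff.mp hd]
  by_cases hcub : ∃ i < 4, cubicExp i = d
  · obtain ⟨i, hi, rfl⟩ := hcub
    rw [coeff_cubicExp_yzCubicPart F hi]
    exact notMem_support_iff.mp hd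
  · push Not at hcub
    exact coeff_yzCubicPart_of_ne F hcub

theorem sub_yzCubicPart_mem_span_X (ha : 0 < a) (hF : Bihom (-3 * a) a a c F) :
    F - yzCubicPart F ∈ Ideal.span {X 5} := by
  rw [← Set.image_singleton, mem_ideal_span_X_image]
  refine fun d hd => ⟨5, rfl, fun h5 => ?_⟩
  rw [mem_support_iff, coeff_sub, hF.coeff_yzCubicPart ha h5, sub_self] at hd
  exact hd rfl

theorem exists_mem_span_X_linear (ha : 0 < a) (hF : Bihom (-3 * a) a a c F) :
    ∃ l m : ℂ, ¬(l = 0 ∧ m = 0) ∧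
      F ∈ Ideal.span ({X 5, C l * X 3 + C m * X 4} : Set (MvPolynomial (Fin 6) ℂ)) := by
  obtain ⟨l, m, hlm, Q, hQ⟩ :=
    exists_linear_dvd_binary_cubic (fun i => coeff (cubicExp i) F)
      (X 3 : MvPolynomial (Fin 6) ℂ) (X 4)
  obtain ⟨W, hW⟩ := Ideal.mem_span_singleton'.mp (hF.sub_yzCubicPart_mem_span_X ha)
  rw [algebraMap_eq, ← yzCubicPart_eq_sum] at hQ
  exact ⟨l, m, hlm, Ideal.mem_span_pair.mpr ⟨W, Q, by linear_combination hW - hQ⟩⟩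

end Bihom

theorem bihom_X_pow_mul_add {n a c : ℤ} {N : ℕ} (hN : (N : ℤ) = n + 3 * a) :
    Bihom n a a c (X 0 ^ N * X 3 ^ 3 + X 1 ^ N * X 4 ^ 3) := by
  simp only [X_pow_eq_monomial, monomial_mul, mul_one]
  refine (bihom_monomial _ ?_ ?_).add (bihom_monomial _ ?_ ?_) <;>
    simp <;> linarith

theorem X_pow_mul_add_notMem_span {N : ℕ} (hN : N ≠ 0) {l m : ℂ} (hlm : ¬(l = 0 ∧ m = 0)) :
    X 0 ^ N * X 3 ^ 3 + X 1 ^ N * X 4 ^ 3 ∉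
      Ideal.span ({X 5, C l * X 3 + C m * X 4} : Set (MvPolynomial (Fin 6) ℂ)) := by
  intro hmem
  obtain ⟨A, B, hAB⟩ := Ideal.mem_span_pair.mp hmem
  have hvanish (P : Fin 6 → ℂ) (h5 : P 5 = 0) (hL : l * P 3 + m * P 4 = 0) :
      P 0 ^ N * P 3 ^ 3 + P 1 ^ N * P 4 ^ 3 = 0 := by
    simpa [h5, hL] using (congrArg (eval P) hAB).symm
  have hm := hvanish ![1, 0, 0, m, -l, 0] rfl (by simp; ring)
  have hl := hvanish ![0, 1, 0, m, -l, 0] rfl (by simp; ring)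
  simp [hN] at hm hl
  exact hlm ⟨hl, hm⟩

theorem stmt1_general (a c n : ℤ) (ha : 1 ≤ a) (hn1 : -3 * a ≤ n) :
    n = -3 * a ↔
      ∀ F : MvPolynomial (Fin 6) ℂ, Bihom n a a c F →
        ∃ l m : ℂ, ¬(l = 0 ∧ m = 0) ∧
          F ∈ Ideal.span ({X 5, C l * X 3 + C m * X 4} : Set (MvPolynomial (Fin 6) ℂ)) := by
  constructor
  · rintro rfl F hF
    exact hF.exists_mem_span_X_linear (by omega)
  · intro h
    by_contra hne
    obtain ⟨N, hN⟩ : ∃ N : ℕ, (N : ℤ) = n + 3 * a :=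
      ⟨(n + 3 * a).toNat, Int.toNat_of_nonneg (by omega)⟩
    obtain ⟨l, m, hlm, hmem⟩ := h _ (bihom_X_pow_mul_add hN)
    exact X_pow_mul_add_notMem_span (by omega) hlm hmem

/-- For `1 ≤ a ≤ c` and `-3a ≤ n < 0`: we have `n = -3a` if and only if every
bihomogeneous polynomial of type `(n; a,a,c)` lies in an ideal `(t, λy + μz)`
for some `(λ,μ) ≠ (0,0)`.  (Every member `X ∈ |3M+nL|` on `𝔽(0,a,a,c)` contains
a surface `{t = ℓ(y,z) = 0}` with `ℓ` a nonzero linear form iff `n = -3a`.) -/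
theorem stmt1 (a c n : ℤ) (ha : 1 ≤ a) (hac : a ≤ c) (hn1 : -3 * a ≤ n) (hn2 : n < 0) :
    n = -3 * a ↔
      ∀ F : MvPolynomial (Fin 6) ℂ, Bihom n a a c F →
        ∃ l m : ℂ, ¬(l = 0 ∧ m = 0) ∧
          F ∈ Ideal.span ({X 5, C l * X 3 + C m * X 4} : Set (MvPolynomial (Fin 6) ℂ)) :=
  stmt1_general a c n ha hn1
end

section
/- Let a, b, c, n be integers with 0 ≤ a ≤ b ≤ c and n < 0. Then: (i) every bihomogeneous polynomial F of type (n; a,b,c) in ℂ[u,v,x,y,z,t] lies in the ideal (y,z,t); (ii) there exists a bihomogeneous polynomial F of type (n; a,b,c) that does not lie in the square ideal (y,z,t)² if and only if n ≥ −c; (iii) if n ≥ −c, then a+b+c+n ≥ 2a, with equality if and only if a = b and n = −c. (Geometrically: when n < 0 the section Γ = {y=z=t=0} lies in the base locus of |3M+nL| on 𝔽(0,a,b,c); a general member X is nonsingular generically along Γ, i.e. its equation contains one of the monomials x²y, x²z, x²t, exactly when n ≥ −c.) -/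
open MvPolynomial Pointwise

/-- The ideal of polynomials all of whose monomials have degree `≥ k` in `y,z,t`. -/
noncomputable def lowJ (k : ℕ) : Ideal (MvPolynomial (Fin 6) ℂ) where
  carrier := {F | ∀ d ∈ F.support, k ≤ d 3 + d 4 + d 5}
  zero_mem' := by intro d hd; simp at hd
  add_mem' := by
    intro f g hf hg d hd
    rcases Finset.mem_union.1 (MvPolynomial.support_add hd) with h | h
    exacts [hf d h, hg d h]
  smul_mem' := by
    intro g f hf d hd
    rw [smul_eq_mul] at hd
    obtain ⟨e, _, e', he', rfl⟩ := Finset.mem_add.1 (MvPolynomial.support_mul g f hd)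
    have := hf e' he'
    simp only [Finsupp.add_apply]
    omega

lemma monomial_mem_span (d : Fin 6 →₀ ℕ) (r : ℂ) (i : Fin 6) (hi : 1 ≤ d i)
    (S : Set (MvPolynomial (Fin 6) ℂ)) (hX : X i ∈ S) :
    monomial d r ∈ Ideal.span S := by
  have hle : Finsupp.single i 1 ≤ d := Finsupp.single_le_iff.2 hi
  have : monomial d r = monomial (d - Finsupp.single i 1) r * X i := by
    rw [MvPolynomial.X, monomial_mul, mul_one, tsub_add_cancel_of_le hle]
  rw [this]
  exact Ideal.mul_mem_left _ _ (Ideal.subset_span hX)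

lemma mem_span_of_w (F : MvPolynomial (Fin 6) ℂ)
    (h : ∀ d ∈ F.support, 1 ≤ d 3 + d 4 + d 5) :
    F ∈ Ideal.span ({X 3, X 4, X 5} : Set (MvPolynomial (Fin 6) ℂ)) := by
  rw [← F.support_sum_monomial_coeff]
  refine Ideal.sum_mem _ fun d hd => ?_
  have := h d hd
  rcases Nat.lt_or_ge (d 3) 1 with h3 | h3
  · rcases Nat.lt_or_ge (d 4) 1 with h4 | h4
    · exact monomial_mem_span _ _ 5 (by omega) _ (by simp)
    · exact monomial_mem_span _ _ 4 h4 _ (by simp)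
  · exact monomial_mem_span _ _ 3 h3 _ (by simp)

lemma monomial_mem_sq (d : Fin 6 →₀ ℕ) (r : ℂ) (h : 2 ≤ d 3 + d 4 + d 5) :
    monomial d r ∈ (Ideal.span ({X 3, X 4, X 5} : Set (MvPolynomial (Fin 6) ℂ))) ^ 2 := by
  obtain ⟨i, hiS, hi⟩ : ∃ i : Fin 6, (X i ∈ ({X 3, X 4, X 5} : Set (MvPolynomial (Fin 6) ℂ))
      ∧ i ∈ ({3,4,5} : Set (Fin 6))) ∧ 1 ≤ d i := by
    rcases Nat.lt_or_ge (d 3) 1 with h3 | h3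
    · rcases Nat.lt_or_ge (d 4) 1 with h4 | h4
      · exact ⟨5, ⟨by simp, by simp⟩, by omega⟩
      · exact ⟨4, ⟨by simp, by simp⟩, h4⟩
    · exact ⟨3, ⟨by simp, by simp⟩, h3⟩
  have hle : Finsupp.single i 1 ≤ d := Finsupp.single_le_iff.2 hi
  set e := d - Finsupp.single i 1 with he
  have hed : e + Finsupp.single i 1 = d := tsub_add_cancel_of_le hle
  have hw : 1 ≤ e 3 + e 4 + e 5 := by
    have h3 := DFunLike.congr_fun hed 3
    have h4 := DFunLike.congr_fun hed 4
    have h5 := DFunLike.congr_fun hed 5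
    simp only [Finsupp.add_apply] at h3 h4 h5
    rcases hiS.2 with rfl | rfl | rfl <;>
      simp [Finsupp.single_apply] at h3 h4 h5 <;> omega
  have hsupp : ∀ d' ∈ (monomial e r).support, 1 ≤ d' 3 + d' 4 + d' 5 := by
    intro d' hd'
    rw [support_monomial] at hd'
    split at hd'
    · simp at hd'
    · rw [Finset.mem_singleton.1 hd']; exact hw
  have : monomial d r = monomial e r * X i := by
    rw [MvPolynomial.X, monomial_mul, mul_one, hed]
  rw [this, sq]
  exact Ideal.mul_mem_mul (mem_span_of_w _ hsupp) (Ideal.subset_span hiS.1)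

lemma mem_sq_of_w (F : MvPolynomial (Fin 6) ℂ)
    (h : ∀ d ∈ F.support, 2 ≤ d 3 + d 4 + d 5) :
    F ∈ (Ideal.span ({X 3, X 4, X 5} : Set (MvPolynomial (Fin 6) ℂ))) ^ 2 := by
  rw [← F.support_sum_monomial_coeff]
  exact Ideal.sum_mem _ fun d hd => monomial_mem_sq _ _ (h d hd)

lemma sq_le_lowJ :
    (Ideal.span ({X 3, X 4, X 5} : Set (MvPolynomial (Fin 6) ℂ))) ^ 2 ≤ lowJ 2 := by
  have hI : Ideal.span ({X 3, X 4, X 5} : Set (MvPolynomial (Fin 6) ℂ)) ≤ lowJ 1 := by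
    rw [Ideal.span_le]
    intro f hf d hd
    rcases hf with rfl | rfl | rfl <;>
    · rw [MvPolynomial.X, support_monomial] at hd
      simp only [if_neg (one_ne_zero)] at hd
      rw [Finset.mem_singleton.1 hd]
      simp [Finsupp.single_apply]
  rw [sq]
  refine le_trans (Ideal.mul_mono hI hI) ?_
  rw [Ideal.mul_le]
  intro f hf g hg d hd
  obtain ⟨e, he, e', he', rfl⟩ := Finset.mem_add.1 (MvPolynomial.support_mul f g hd)
  have h1 := hf e he
  have h2 := hg e' he'
  simp only [Finsupp.add_apply]
  omega

/-- For `0 ≤ a ≤ b ≤ c` and `n < 0`: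
(i) every bihomogeneous `F` of type `(n;a,b,c)` lies in the ideal `(y,z,t)`
    (the section `Γ = {y=z=t=0}` lies in the base locus of `|3M+nL|`);
(ii) some bihomogeneous `F` of type `(n;a,b,c)` lies outside `(y,z,t)²`
    if and only if `n ≥ -c`;
(iii) if `n ≥ -c` then `a+b+c+n ≥ 2a`, with equality iff `a = b` and `n = -c`. -/
theorem stmt2 (a b c n : ℤ) (h0 : 0 ≤ a) (hab : a ≤ b) (hbc : b ≤ c) (hn : n < 0) :
    (∀ F : MvPolynomial (Fin 6) ℂ, Bihom n a b c F →
      F ∈ Ideal.span ({X 3, X 4, X 5} : Set (MvPolynomial (Fin 6) ℂ))) ∧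
    ((∃ F : MvPolynomial (Fin 6) ℂ, Bihom n a b c F ∧
      F ∉ (Ideal.span ({X 3, X 4, X 5} : Set (MvPolynomial (Fin 6) ℂ))) ^ 2) ↔ -c ≤ n) ∧
    (-c ≤ n → (2 * a ≤ a + b + c + n ∧ (a + b + c + n = 2 * a ↔ a = b ∧ n = -c))) := by
  refine ⟨?_, ⟨?_, ?_⟩, ?_⟩
  · -- (i)
    intro F hF
    refine mem_span_of_w F fun d hd => ?_
    obtain ⟨h1, h2⟩ := hF d hd
    by_contra hw
    have h3 : d 3 = 0 := by omega
    have h4 : d 4 = 0 := by omega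
    have h5 : d 5 = 0 := by omega
    rw [h3, h4, h5] at h2
    push_cast at h2
    have : (0:ℤ) ≤ (d 0 : ℤ) + (d 1 : ℤ) := by positivity
    omega
  · -- (ii) forward
    rintro ⟨F, hF, hF2⟩
    by_contra hnc
    push_neg at hnc
    refine hF2 (mem_sq_of_w F fun d hd => ?_)
    obtain ⟨h1, h2⟩ := hF d hd
    by_contra hw
    push_neg at hw
    have hb3 : (d 3 : ℤ) + d 4 + d 5 ≤ 1 := by exact_mod_cast (by omega : d 3 + d 4 + d 5 ≤ 1)
    have key : a * (d 3 : ℤ) + b * d 4 + c * d 5 ≤ c * ((d 3 : ℤ) + d 4 + d 5) := by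
      have c3 : a * (d 3 : ℤ) ≤ c * d 3 :=
        mul_le_mul_of_nonneg_right (by linarith) (by positivity)
      have c4 : b * (d 4 : ℤ) ≤ c * d 4 :=
        mul_le_mul_of_nonneg_right (by linarith) (by positivity)
      have c5 : c * (d 5 : ℤ) ≤ c * d 5 := le_refl _
      linarith [c3, c4, c5, mul_add c ((d 3 : ℤ) + d 4) (d 5 : ℤ)]
    have hcle : c * ((d 3 : ℤ) + d 4 + d 5) ≤ c := by
      nlinarith [hb3]
    have hp : (0:ℤ) ≤ (d 0 : ℤ) + (d 1 : ℤ) := by positivity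
    omega
  · -- (ii) backward
    intro hnc
    set d : Fin 6 →₀ ℕ :=
      Finsupp.single 0 (n + c).toNat + Finsupp.single 2 2 + Finsupp.single 5 1 with hd
    have hvals : d 0 = (n + c).toNat ∧ d 1 = 0 ∧ d 2 = 2 ∧ d 3 = 0 ∧ d 4 = 0 ∧ d 5 = 1 := by
      refine ⟨?_, ?_, ?_, ?_, ?_, ?_⟩ <;> simp [hd, Finsupp.single_apply]
    obtain ⟨v0, v1, v2, v3, v4, v5⟩ := hvals
    refine ⟨monomial d 1, ?_, ?_⟩
    · intro e he
      rw [support_monomial, if_neg one_ne_zero, Finset.mem_singleton] at he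
      subst he
      rw [v0, v1, v2, v3, v4, v5]
      constructor
      · omega
      · push_cast
        rw [Int.toNat_of_nonneg (by linarith)]
        ring
    · intro hmem
      have := sq_le_lowJ hmem d (by
        rw [support_monomial, if_neg one_ne_zero]; exact Finset.mem_singleton_self d)
      omega
  · -- (iii)
    intro hnc
    constructor
    · omega
    · omega
end

section
/- Let n < 0 and d be integers. There exist integers a, b, c with 0 ≤ a ≤ b ≤ c, a+b+c = d, n+3a ≥ 0, n+c ≥ 0, and not (a = b and n = −3a), if and only if d ≥ 2⌈−n/3⌉ − n + ε, where ε = 1 if 3 divides n and ε = 0 otherwise. -/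
/-- Arithmetic characterization of the geography of cubic del Pezzo fibrations:
for `n < 0`, there exist `0 ≤ a ≤ b ≤ c` with `a+b+c = d`, `n+3a ≥ 0`, `n+c ≥ 0`
and `¬(a = b ∧ n = -3a)` if and only if `d ≥ 2⌈-n/3⌉ - n + ε`, where `ε = 1` if
`3 ∣ n` and `ε = 0` otherwise. -/
theorem stmt3 (n d : ℤ) (hn : n < 0) :
    (∃ a b c : ℤ, 0 ≤ a ∧ a ≤ b ∧ b ≤ c ∧ a + b + c = d ∧
      0 ≤ n + 3 * a ∧ 0 ≤ n + c ∧ ¬(a = b ∧ n = -3 * a)) ↔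
    2 * ⌈(-n : ℚ) / 3⌉ - n + (if (3 : ℤ) ∣ n then 1 else 0) ≤ d := by
  set k := ⌈(-n : ℚ) / 3⌉ with hkdef
  have hk1 : -n ≤ 3 * k := by
    have h := Int.le_ceil ((-n : ℚ) / 3)
    rw [div_le_iff₀ (by norm_num)] at h
    have : ((-n : ℤ) : ℚ) ≤ ((3 * k : ℤ) : ℚ) := by push_cast; linarith
    exact_mod_cast this
  have hk3 : 3 * k ≤ -n + 2 := by
    have h : ((k - 1 : ℤ) : ℚ) < (-n : ℚ) / 3 := Int.lt_ceil.mp (by omega)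
    rw [lt_div_iff₀ (by norm_num)] at h
    have : ((k - 1) * 3 : ℤ) < ((-n : ℤ) : ℚ) := by exact_mod_cast h
    have : (k - 1) * 3 < -n := by exact_mod_cast this
    omega
  have hk2 : ∀ a : ℤ, -n ≤ 3 * a → k ≤ a := by
    intro a ha
    rw [hkdef]
    apply Int.ceil_le.mpr
    rw [div_le_iff₀ (by norm_num)]
    have : ((-n : ℤ) : ℚ) ≤ ((a * 3 : ℤ) : ℚ) := by exact_mod_cast (by omega : -n ≤ a * 3)
    push_cast at this ⊢
    linarith
  constructor
  · rintro ⟨a, b, c, h0, hab, hbc, hsum, h3a, hc, hne⟩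
    have ha : k ≤ a := hk2 a (by omega)
    by_cases hdvd : (3 : ℤ) ∣ n
    · rw [if_pos hdvd]
      obtain ⟨m, hm⟩ := hdvd
      omega
    · rw [if_neg hdvd]
      omega
  · intro hd
    by_cases hdvd : (3 : ℤ) ∣ n
    · rw [if_pos hdvd] at hd
      obtain ⟨m, hm⟩ := hdvd
      refine ⟨k, k + 1, d - 2 * k - 1, by omega, by omega, by omega, by omega,
        by omega, by omega, by omega⟩
    · rw [if_neg hdvd] at hd
      refine ⟨k, k, d - 2 * k, by omega, by omega, by omega, by omega,
        by omega, by omega, ?_⟩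
      rintro ⟨-, hna⟩
      exact hdvd ⟨-k, by omega⟩
end

section
/- Consider the action of ℂ* × ℂ* on ℂ⁶ with coordinates (u₀,u₁,u₂,x₀,x₁,x₂) given by λ·(u₀,u₁,u₂,x₀,x₁,x₂) = (λu₀, λu₁, λu₂, λ^{−1}x₀, λ^{−1}x₁, x₂) and μ·(u₀,u₁,u₂,x₀,x₁,x₂) = (u₀,u₁,u₂, μx₀, μx₁, μx₂). Fix integers e and m with e > m > 0, and call f ∈ ℂ[u₀,u₁,u₂,x₀,x₁,x₂] an eigenpolynomial if f(λ·p) = λ^{−m} f(p) and f(μ·p) = μ^{e} f(p) for all nonzero λ, μ ∈ ℂ and all p. Then for a point p = (u₀,u₁,u₂,x₀,x₁,x₂) ∈ ℂ⁶ the following are equivalent: (i) some eigenpolynomial is nonzero at p; (ii) (u₀,u₁,u₂,x₂) ≠ (0,0,0,0) and (x₀,x₁) ≠ (0,0). -/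
open MvPolynomial

private lemma evalAevalPoly (f : MvPolynomial (Fin 6) ℂ) (g : Fin 6 → Polynomial ℂ) (l : ℂ) :
    Polynomial.eval l (aeval g f) = eval (fun i => Polynomial.eval l (g i)) f := by
  rw [aeval_def, ← Polynomial.coe_evalRingHom,
    eval₂_comp_left (Polynomial.evalRingHom l) (algebraMap ℂ (Polynomial ℂ)) g f]
  have : (Polynomial.evalRingHom l).comp (algebraMap ℂ (Polynomial ℂ)) = RingHom.id ℂ := by
    ext x; simp
  rw [this]
  rfl

/-- Wall crossing from the scroll `𝔽(1,1,0)` over `ℙ²` to `𝔽(0,1,1,1)` over `ℙ¹`: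
for the `ℂ* × ℂ*` action on `ℂ⁶` (coordinates `u₀,u₁,u₂,x₀,x₁,x₂` indexed `0,…,5`)
given by `λ·p = (λu₀, λu₁, λu₂, λ⁻¹x₀, λ⁻¹x₁, x₂)` and
`μ·p = (u₀,u₁,u₂, μx₀, μx₁, μx₂)`, and a character `eM - mL` with `e > m > 0`,
a point `p` admits an eigenpolynomial nonzero at it if and only if
`(u₀,u₁,u₂,x₂) ≠ 0` and `(x₀,x₁) ≠ 0`. -/
theorem stmt10 (e m : ℤ) (hm : 0 < m) (hem : m < e) (p : Fin 6 → ℂ) :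
    (∃ f : MvPolynomial (Fin 6) ℂ,
      (∀ (l : ℂ), l ≠ 0 → ∀ q : Fin 6 → ℂ,
        eval (fun i : Fin 6 => if (i : ℕ) < 3 then l * q i
          else if (i : ℕ) < 5 then l⁻¹ * q i else q i) f
            = l ^ (-m) * eval q f) ∧
      (∀ (μ : ℂ), μ ≠ 0 → ∀ q : Fin 6 → ℂ,
        eval (fun i : Fin 6 => if (i : ℕ) < 3 then q i else μ * q i) f
            = μ ^ e * eval q f) ∧
      eval p f ≠ 0) ↔
    (¬(p 0 = 0 ∧ p 1 = 0 ∧ p 2 = 0 ∧ p 5 = 0) ∧ ¬(p 3 = 0 ∧ p 4 = 0)) := by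
  have hMt : ((m.toNat : ℤ)) = m := Int.toNat_of_nonneg hm.le
  have hEt : ((e.toNat : ℤ)) = e := Int.toNat_of_nonneg (hm.trans hem).le
  have hAt : (((e - m).toNat : ℤ)) = e - m := Int.toNat_of_nonneg (by omega)
  constructor
  · rintro ⟨f, hL, hM, hp⟩
    constructor
    · rintro ⟨h0, h1, h2, h5⟩
      -- compare the μ = 2 action with the λ = 2⁻¹ action: both give the same point
      have hq : (fun i : Fin 6 => if (i : ℕ) < 3 then p i else (2:ℂ) * p i)
          = (fun i : Fin 6 => if (i : ℕ) < 3 then (2:ℂ)⁻¹ * p i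
              else if (i : ℕ) < 5 then ((2:ℂ)⁻¹)⁻¹ * p i else p i) := by
        funext i
        fin_cases i <;> simp [h0, h1, h2, h5]
      have e1 := hM 2 two_ne_zero p
      have e2 := hL (2:ℂ)⁻¹ (by norm_num) p
      rw [hq] at e1
      rw [e1] at e2
      have h2m : ((2:ℂ)⁻¹) ^ (-m) = (2:ℂ) ^ m := by
        rw [inv_zpow, zpow_neg, inv_inv]
      rw [h2m] at e2
      have hC : (2:ℂ) ^ e = (2:ℂ) ^ m := mul_right_cancel₀ hp e2
      have hR : (2:ℝ) ^ e = (2:ℝ) ^ m := by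
        apply Complex.ofReal_injective
        push_cast
        exact hC
      have hlt : (2:ℝ) ^ m < (2:ℝ) ^ e := zpow_lt_zpow_right₀ one_lt_two hem
      linarith
    · rintro ⟨h3, h4⟩
      -- f composed with the λ-action at p is a polynomial in λ
      set F : Polynomial ℂ := aeval (fun i : Fin 6 =>
        if (i : ℕ) < 3 then Polynomial.C (p i) * Polynomial.X
        else if (i : ℕ) < 5 then 0 else Polynomial.C (p i)) f with hF
      set Q : Polynomial ℂ :=
        Polynomial.X ^ m.toNat * F - Polynomial.C (eval p f) with hQ
      have hroot : ∀ l : ℂ, l ≠ 0 → Q.IsRoot l := by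
        intro l hl
        have key : (fun i : Fin 6 => Polynomial.eval l
              (if (i : ℕ) < 3 then Polynomial.C (p i) * Polynomial.X
                else if (i : ℕ) < 5 then 0 else Polynomial.C (p i)))
            = (fun i : Fin 6 => if (i : ℕ) < 3 then l * p i
                else if (i : ℕ) < 5 then l⁻¹ * p i else p i) := by
          funext i
          fin_cases i <;> simp [h3, h4] <;> ring
        have hFl : F.eval l = l ^ (-m) * eval p f := by
          rw [hF, evalAevalPoly, key, hL l hl p]
        have hpow : (l : ℂ) ^ m.toNat = l ^ (m : ℤ) := by rw [← zpow_natCast, hMt]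
        have hlm : l ^ m.toNat * l ^ (-m) = 1 := by
          rw [hpow, zpow_neg, mul_inv_cancel₀ (zpow_ne_zero _ hl)]
        simp only [Polynomial.IsRoot, hQ, Polynomial.eval_sub, Polynomial.eval_mul,
          Polynomial.eval_pow, Polynomial.eval_X, Polynomial.eval_C, hFl]
        rw [← mul_assoc, hlm, one_mul, sub_self]
      have hQ0 : Q = 0 := by
        apply Polynomial.eq_zero_of_infinite_isRoot
        apply Set.Infinite.mono (s := {(0:ℂ)}ᶜ)
        · intro x hx; exact hroot x hx
        · exact Set.Finite.infinite_compl (Set.finite_singleton 0)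
      have h0 := congrArg (Polynomial.eval 0) hQ0
      simp only [hQ, Polynomial.eval_sub, Polynomial.eval_mul, Polynomial.eval_pow,
        Polynomial.eval_X, Polynomial.eval_C, Polynomial.eval_zero] at h0
      rw [zero_pow (by omega), zero_mul, zero_sub, neg_eq_zero] at h0
      exact hp h0
  · rintro ⟨ha, hb⟩
    obtain ⟨i, hi3, hi5, hpi⟩ : ∃ i : Fin 6, ¬((i : ℕ) < 3) ∧ (i : ℕ) < 5 ∧ p i ≠ 0 := by
      by_cases h3 : p 3 = 0
      · exact ⟨4, by decide, by decide, fun h4 => hb ⟨h3, h4⟩⟩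
      · exact ⟨3, by decide, by decide, h3⟩
    by_cases h5 : p 5 = 0
    · obtain ⟨j, hj3, hpj⟩ : ∃ j : Fin 6, ((j : ℕ) < 3) ∧ p j ≠ 0 := by
        by_cases h0 : p 0 = 0
        · by_cases h1 : p 1 = 0
          · exact ⟨2, by decide, fun h2 => ha ⟨h0, h1, h2, h5⟩⟩
          · exact ⟨1, by decide, h1⟩
        · exact ⟨0, by decide, h0⟩
      refine ⟨X j ^ (e - m).toNat * X i ^ e.toNat, ?_, ?_, ?_⟩
      · intro l hl q
        simp only [map_mul, map_pow, eval_X, if_pos hj3, if_neg hi3, if_pos hi5]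
        have h1 : (l : ℂ) ^ ((e - m).toNat) = l ^ (e - m) := by
          rw [← zpow_natCast, hAt]
        have h2 : (l⁻¹ : ℂ) ^ (e.toNat) = l ^ (-e) := by
          rw [inv_pow, ← zpow_natCast, hEt, ← zpow_neg]
        have h3 : l ^ (e - m) * l ^ (-e) = l ^ (-m) := by
          rw [← zpow_add₀ hl]; ring_nf
        rw [mul_pow, mul_pow, h1, h2, ← h3]; ring
      · intro μ hμ q
        simp only [map_mul, map_pow, eval_X, if_pos hj3, if_neg hi3]
        have h2 : (μ : ℂ) ^ (e.toNat) = μ ^ e := by rw [← zpow_natCast, hEt]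
        rw [mul_pow, ← h2]; ring
      · simp only [map_mul, map_pow, eval_X]
        exact mul_ne_zero (pow_ne_zero _ hpj) (pow_ne_zero _ hpi)
    · refine ⟨X i ^ m.toNat * X (5 : Fin 6) ^ (e - m).toNat, ?_, ?_, ?_⟩
      · intro l hl q
        simp only [map_mul, map_pow, eval_X, if_neg hi3, if_pos hi5,
          if_neg (show ¬(((5 : Fin 6) : ℕ) < 3) from by decide),
          if_neg (show ¬(((5 : Fin 6) : ℕ) < 5) from by decide)]
        have h1 : (l⁻¹ : ℂ) ^ (m.toNat) = l ^ (-m) := by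
          rw [inv_pow, ← zpow_natCast, hMt, ← zpow_neg]
        rw [mul_pow, ← h1]; ring
      · intro μ hμ q
        simp only [map_mul, map_pow, eval_X, if_neg hi3,
          if_neg (show ¬(((5 : Fin 6) : ℕ) < 3) from by decide)]
        have h2 : (μ : ℂ) ^ (m.toNat) * μ ^ ((e - m).toNat) = μ ^ e := by
          rw [← pow_add, show m.toNat + (e - m).toNat = e.toNat from by omega,
            ← zpow_natCast, hEt]
        rw [mul_pow, mul_pow, ← h2]; ring
      · simp only [map_mul, map_pow, eval_X]
        exact mul_ne_zero (pow_ne_zero _ hpi) (pow_ne_zero _ h5)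
end
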